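/- arXiv:1408.2428 — 2 statements merged into one kernel-verified Lean document; each statement's English description precedes it below -/
import Mathlib

section
/- If a monomial h₁ dominates a monomial h₂ (i.e., h₂(x) ≤ h₁(x)) at two points a and b of F^n, where F is a divisible linearly ordered abelian group, then h₁ dominates h₂ at every point a^t b^{1−t} (t rational, 0 ≤ t ≤ 1) on the segment connecting a and b. -/
/-!
Written additively, a monomial is an affine map `Fⁿ → F` over `ℚ`, so `h₁ - h₂` is affine and
the set where it is nonnegative, the preimage of a half-line, is convex.
-/

section

variable {𝕜 ι E F : Type*} [Ring 𝕜] [Fintype ι] [AddCommGroup E] [Module 𝕜 E]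
  [AddCommGroup F] [Module 𝕜 F]

def monomialAffineMap (α : F) (i : ι → ℤ) : (ι → F) →ᵃ[𝕜] F :=
  AffineMap.const 𝕜 (ι → F) α + (∑ j, i j • LinearMap.proj j : (ι → F) →ₗ[𝕜] F).toAffineMap

@[simp]
theorem monomialAffineMap_apply (α : F) (i : ι → ℤ) (x : ι → F) :
    monomialAffineMap (𝕜 := 𝕜) α i x = α + ∑ j, i j • x j := by
  simp [monomialAffineMap]

theorem convex_setOf_affineMap_le [PartialOrder 𝕜] [PartialOrder F] [IsOrderedAddMonoid F]
    [PosSMulMono 𝕜 F] (f g : E →ᵃ[𝕜] F) : Convex 𝕜 {x | g x ≤ f x} := by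
  simpa only [Set.preimage, Set.mem_Ici, AffineMap.coe_sub, Pi.sub_apply, sub_nonneg]
    using (convex_Ici (0 : F)).affine_preimage (f - g)

end

/-- If a monomial `h₁` dominates a monomial `h₂` (i.e. `h₂(x) ≤ h₁(x)`) at two points
`a` and `b` of `Fⁿ`, where `F` is a divisible linearly ordered abelian group
(modelled additively, divisibility giving an order-compatible `ℚ`-module structure;
a monomial `α·x₁^{i₁}···xₙ^{iₙ}` becomes `α + ∑ j, iⱼ • xⱼ`), then `h₁` dominates
`h₂` at every point `a^t b^{1−t}` (i.e. `t • a + (1-t) • b`, coordinatewise, for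
rational `0 ≤ t ≤ 1`) on the segment connecting `a` and `b`. -/
theorem monomial_domination_on_segment {F : Type*} [AddCommGroup F] [LinearOrder F]
    [IsOrderedAddMonoid F]
    [Module ℚ F] [PosSMulMono ℚ F] {n : ℕ} (α₁ α₂ : F) (i₁ i₂ : Fin n → ℤ)
    (a b : Fin n → F) (h₁ h₂ : (Fin n → F) → F)
    (hh₁ : h₁ = fun x => α₁ + ∑ j, i₁ j • x j)
    (hh₂ : h₂ = fun x => α₂ + ∑ j, i₂ j • x j)
    (ha : h₂ a ≤ h₁ a) (hb : h₂ b ≤ h₁ b)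
    (t : ℚ) (ht0 : 0 ≤ t) (ht1 : t ≤ 1) :
    h₂ (fun j => t • a j + (1 - t) • b j) ≤ h₁ (fun j => t • a j + (1 - t) • b j) := by
  have hconv := convex_setOf_affineMap_le (monomialAffineMap (𝕜 := ℚ) α₁ i₁)
    (monomialAffineMap α₂ i₂)
  simp only [monomialAffineMap_apply] at hconv
  subst hh₁ hh₂
  exact hconv ha hb ht0 (sub_nonneg.mpr ht1) (add_sub_cancel t 1)
end

section
/- Let F be the supertropical semifield over ℚ and let X ⊂ F^(2) be the corner locus of f = λ₁ + λ₂ + 0 (the tropical line). There is no tangible polynomial g ∈ F[λ₁,λ₂] such that g(a) is tangible for all tangible points a of X and g ≡ f on X; i.e., the restriction of f to X admits no tangible lift among polynomials. However, λ₁λ₂ + 0 is a tangible polynomial agreeing in ν-value with λ₁² + λ₂² + 0 on X. -/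
/-!
A tangible lift `g` has value `0` at the origin, so all its coefficients are `≤ 0` and at most
one of its monomials attains `0` there (two would produce a ghost). On the ray `λ₁ = λ₂ = t`
with `t` large, the value `t` must be attained by a monomial of degree `1` with coefficient `0`,
i.e. by `λ₁` or `λ₂`; at `(-1, 0)` resp. `(0, -1)` the value `0` must be attained by a monomial
with coefficient `0` not involving `λ₁` resp. `λ₂`. Whichever of `λ₁`, `λ₂` occurs in `g`, it and
the monomial not involving it are two distinct monomials attaining `0` at the origin.
-/

/-- The supertropical semifield over `ℚ`: an element is given by its `ν`-value in `ℚ`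
together with a flag which is `true` for ghost elements and `false` for tangibles. -/
structure STQ where
  val : ℚ
  ghost : Bool
  deriving DecidableEq

/-- Supertropical addition: the element of larger `ν`-value wins, and a tie produces
a ghost (`a + a = a^ν`). -/
instance : Add STQ :=
  ⟨fun x y => if y.val < x.val then x else if x.val < y.val then y else ⟨x.val, true⟩⟩

/-- Evaluation of a tangible monomial `α·λ₁^i·λ₂^j`, recorded as the data
`(α, i, j) : ℚ × ℕ × ℕ`, at the tangible point `(x, y)` (max-plus conventions). -/
def tmonEval (m : ℚ × ℕ × ℕ) (x y : ℚ) : STQ :=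
  ⟨m.1 + (m.2.1 : ℚ) * x + (m.2.2 : ℚ) * y, false⟩

/-- Evaluation of a tangible polynomial, given as a nonempty list `m :: ms` of tangible
monomials, at the tangible point `(x, y)`: the supertropical sum of the monomial values. -/
def tpolyEval (m : ℚ × ℕ × ℕ) (ms : List (ℚ × ℕ × ℕ)) (x y : ℚ) : STQ :=
  ms.foldl (fun s m' => s + tmonEval m' x y) (tmonEval m x y)

/-- The set of tangible points of the tropical line `X = Z_corner(λ₁ + λ₂ + 0)`:
points where at least two of `λ₁, λ₂, 0` attain the maximum. -/
def Xline : Set (ℚ × ℚ) :=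
  {p | (p.1 = p.2 ∧ 0 ≤ p.1) ∨ (p.2 = 0 ∧ p.1 ≤ 0) ∨ (p.1 = 0 ∧ p.2 ≤ 0)}

namespace STQ

lemma add_def (x y : STQ) :
    x + y = if y.val < x.val then x else if x.val < y.val then y else ⟨x.val, true⟩ := rfl

lemma add_eq_left {x y : STQ} (h : y.val < x.val) : x + y = x := by
  rw [add_def, if_pos h]

lemma add_eq_right {x y : STQ} (h : x.val < y.val) : x + y = y := by
  rw [add_def, if_neg h.not_gt, if_pos h]

lemma add_eq_ghost {x y : STQ} (h : x.val = y.val) : x + y = ⟨x.val, true⟩ := by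
  rw [add_def, if_neg h.symm.not_lt, if_neg h.not_lt]

lemma val_add (x y : STQ) : (x + y).val = max x.val y.val := by
  rcases lt_trichotomy y.val x.val with h | h | h
  · rw [add_eq_left h, max_eq_left h.le]
  · rw [add_eq_ghost h.symm, h, max_self]
  · rw [add_eq_right h, max_eq_right h.le]

lemma add_eq_self_of_ghost {s y : STQ} (hs : s.ghost = true) (h : y.val ≤ s.val) : s + y = s := by
  rcases h.lt_or_eq with h | h
  · exact add_eq_left h
  · rw [add_eq_ghost h.symm, ← hs]

section Foldl

variable {α : Type*} (f : α → STQ)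

lemma val_le_val_foldl_add (l : List α) (s : STQ) :
    s.val ≤ (l.foldl (fun t a => t + f a) s).val := by
  induction l generalizing s with
  | nil => exact le_rfl
  | cons a l ih => exact (le_max_left _ _).trans ((val_add s (f a)).symm ▸ ih (s + f a))

lemma val_apply_le_val_foldl_add {l : List α} {a : α} (ha : a ∈ l) (s : STQ) :
    (f a).val ≤ (l.foldl (fun t a => t + f a) s).val := by
  induction l generalizing s with
  | nil => cases ha
  | cons b l ih =>
    rcases List.mem_cons.1 ha with rfl | ha
    · exact (le_max_right _ _).trans ((val_add s (f a)).symm ▸ val_le_val_foldl_add f l (s + f a))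
    · exact ih ha _

lemma val_foldl_add_eq (l : List α) (s : STQ) :
    (l.foldl (fun t a => t + f a) s).val = s.val ∨
      ∃ a ∈ l, (l.foldl (fun t a => t + f a) s).val = (f a).val := by
  induction l generalizing s with
  | nil => exact Or.inl rfl
  | cons b l ih =>
    rcases ih (s + f b) with h | ⟨a, ha, h⟩
    · rw [List.foldl_cons, h, val_add]
      rcases max_choice s.val (f b).val with hb | hb
      · exact Or.inl hb
      · exact Or.inr ⟨b, List.mem_cons_self, hb⟩
    · exact Or.inr ⟨a, List.mem_cons_of_mem _ ha, h⟩

lemma foldl_add_eq_self_of_ghost {l : List α} {s : STQ} (hs : s.ghost = true)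
    (h : ∀ a ∈ l, (f a).val ≤ s.val) : l.foldl (fun t a => t + f a) s = s := by
  induction l with
  | nil => rfl
  | cons b l ih =>
    rw [List.foldl_cons, add_eq_self_of_ghost hs (h b List.mem_cons_self)]
    exact ih fun a ha => h a (List.mem_cons_of_mem _ ha)

lemma ghost_foldl_add_of_mem {l : List α} {s : STQ} {b : α} (hb : b ∈ l)
    (hbs : (f b).val = s.val) (h : ∀ a ∈ l, (f a).val ≤ s.val) :
    (l.foldl (fun t a => t + f a) s).ghost = true := by
  induction l generalizing s with
  | nil => cases hb
  | cons c l ih =>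
    have h' : ∀ a ∈ l, (f a).val ≤ s.val := fun a ha => h a (List.mem_cons_of_mem _ ha)
    rw [List.foldl_cons]
    rcases (h c List.mem_cons_self).lt_or_eq with hc | hc
    · have hbc : b ≠ c := by rintro rfl; exact hc.ne hbs
      rw [add_eq_left hc]
      exact ih ((List.mem_cons.1 hb).resolve_left hbc) hbs h'
    · rw [add_eq_ghost hc.symm, foldl_add_eq_self_of_ghost (s := ⟨s.val, true⟩) f rfl h']

lemma ghost_foldl_add_of_mem_of_val_eq {l : List α} {s : STQ} {b : α} (hb : b ∈ l)
    (hbs : (f b).val = (l.foldl (fun t a => t + f a) s).val)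
    (hs : s.val = (l.foldl (fun t a => t + f a) s).val) :
    (l.foldl (fun t a => t + f a) s).ghost = true :=
  ghost_foldl_add_of_mem f hb (hbs.trans hs.symm)
    fun _ ha => hs ▸ val_apply_le_val_foldl_add f ha s

lemma ghost_foldl_add_of_ne {l : List α} {s : STQ} {a b : α} (ha : a ∈ l) (hb : b ∈ l)
    (hab : a ≠ b)
    (hfa : (f a).val = (l.foldl (fun t a => t + f a) s).val)
    (hfb : (f b).val = (l.foldl (fun t a => t + f a) s).val) :
    (l.foldl (fun t a => t + f a) s).ghost = true := by
  induction l generalizing s with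
  | nil => cases ha
  | cons c l ih =>
    rw [List.foldl_cons] at hfa hfb ⊢
    have hc : (f c).val = (l.foldl (fun t a => t + f a) (s + f c)).val →
        (s + f c).val = (l.foldl (fun t a => t + f a) (s + f c)).val := fun h =>
      le_antisymm (val_le_val_foldl_add f l _)
        (by rw [val_add]; exact h.symm.le.trans (le_max_right _ _))
    rcases List.mem_cons.1 ha with rfl | ha'
    · exact ghost_foldl_add_of_mem_of_val_eq f ((List.mem_cons.1 hb).resolve_left hab.symm) hfb
        (hc hfa)
    rcases List.mem_cons.1 hb with rfl | hb'
    · exact ghost_foldl_add_of_mem_of_val_eq f ha' hfa (hc hfb)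
    exact ih ha' hb' hfa hfb

end Foldl

end STQ

section TangiblePolynomial

variable {m : ℚ × ℕ × ℕ} {ms : List (ℚ × ℕ × ℕ)}

lemma val_tmonEval (q : ℚ × ℕ × ℕ) (x y : ℚ) :
    (tmonEval q x y).val = q.1 + q.2.1 * x + q.2.2 * y := rfl

lemma val_tmonEval_le_val_tpolyEval {q : ℚ × ℕ × ℕ} (hq : q ∈ m :: ms) (x y : ℚ) :
    (tmonEval q x y).val ≤ (tpolyEval m ms x y).val := by
  rcases List.mem_cons.1 hq with rfl | hq
  · exact STQ.val_le_val_foldl_add _ ms _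
  · exact STQ.val_apply_le_val_foldl_add (fun q => tmonEval q x y) hq _

lemma exists_val_tmonEval_eq_val_tpolyEval (x y : ℚ) :
    ∃ q ∈ m :: ms, (tmonEval q x y).val = (tpolyEval m ms x y).val := by
  rcases STQ.val_foldl_add_eq (fun q => tmonEval q x y) ms (tmonEval m x y) with h | ⟨q, hq, h⟩
  · exact ⟨m, List.mem_cons_self, h.symm⟩
  · exact ⟨q, List.mem_cons_of_mem _ hq, h.symm⟩

lemma tpolyEval_ghost_of_ne {q q' : ℚ × ℕ × ℕ} {x y : ℚ} (hq : q ∈ m :: ms) (hq' : q' ∈ m :: ms)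
    (hne : q ≠ q') (h : (tmonEval q x y).val = (tpolyEval m ms x y).val)
    (h' : (tmonEval q' x y).val = (tpolyEval m ms x y).val) :
    (tpolyEval m ms x y).ghost = true := by
  rcases List.mem_cons.1 hq with rfl | hqs
  · exact STQ.ghost_foldl_add_of_mem_of_val_eq _ ((List.mem_cons.1 hq').resolve_left hne.symm)
      h' h
  rcases List.mem_cons.1 hq' with rfl | hqs'
  · exact STQ.ghost_foldl_add_of_mem_of_val_eq _ hqs h h'
  exact STQ.ghost_foldl_add_of_ne _ hqs hqs' hne h h'

end TangiblePolynomial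

lemma eq_one_of_add_mul_eq_self {c t : ℚ} {n : ℕ} (hc : c ≤ 0) (ht : -t < c) (h : c + n * t = t) :
    n = 1 := by
  rcases n with _ | _ | n
  · push_cast at h; linarith
  · rfl
  · push_cast at h; nlinarith [n.cast_nonneg (α := ℚ)]

def IsTangibleLiftOnXline (m : ℚ × ℕ × ℕ) (ms : List (ℚ × ℕ × ℕ)) : Prop :=
  ∀ p ∈ Xline, (tpolyEval m ms p.1 p.2).ghost = false ∧
    (tpolyEval m ms p.1 p.2).val = max p.1 (max p.2 0)

namespace IsTangibleLiftOnXline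

variable {m : ℚ × ℕ × ℕ} {ms : List (ℚ × ℕ × ℕ)}

lemma val_origin (h : IsTangibleLiftOnXline m ms) : (tpolyEval m ms 0 0).val = 0 := by
  simpa using (h (0, 0) (Or.inl ⟨rfl, le_rfl⟩)).2

lemma coeff_nonpos (h : IsTangibleLiftOnXline m ms) {q : ℚ × ℕ × ℕ} (hq : q ∈ m :: ms) :
    q.1 ≤ 0 := by
  simpa [val_tmonEval, h.val_origin] using val_tmonEval_le_val_tpolyEval hq 0 0

lemma exists_linear_monomial (h : IsTangibleLiftOnXline m ms) :
    ∃ q ∈ m :: ms, q.1 = 0 ∧ q.2.1 + q.2.2 = 1 := by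
  obtain ⟨c, hc⟩ := ((m :: ms).finite_toSet.image Prod.fst).bddBelow
  have hcq : ∀ q ∈ m :: ms, c ≤ q.1 := fun q hq => hc ⟨q, hq, rfl⟩
  set t := 1 - c with htc
  have ht : 0 ≤ t := by linarith [hcq m List.mem_cons_self, h.coeff_nonpos List.mem_cons_self]
  have hval : (tpolyEval m ms t t).val = t := by
    simpa [max_eq_left ht] using (h (t, t) (Or.inl ⟨rfl, ht⟩)).2
  obtain ⟨q, hq, hqt⟩ := exists_val_tmonEval_eq_val_tpolyEval (m := m) (ms := ms) t t
  rw [hval, val_tmonEval] at hqt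
  have hdeg : q.2.1 + q.2.2 = 1 := by
    refine eq_one_of_add_mul_eq_self (t := t) (h.coeff_nonpos hq) (by linarith [hcq q hq]) ?_
    push_cast; linarith
  refine ⟨q, hq, ?_, hdeg⟩
  have hdeg' : (q.2.1 : ℚ) + q.2.2 = 1 := by exact_mod_cast hdeg
  linear_combination hqt - t * hdeg'

lemma exists_monomial_free_of_fst (h : IsTangibleLiftOnXline m ms) :
    ∃ q ∈ m :: ms, q.1 = 0 ∧ q.2.1 = 0 := by
  have hval : (tpolyEval m ms (-1) 0).val = 0 := by
    simpa using (h (-1, 0) (Or.inr (Or.inl ⟨rfl, by norm_num⟩))).2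
  obtain ⟨q, hq, hq0⟩ := exists_val_tmonEval_eq_val_tpolyEval (m := m) (ms := ms) (-1) 0
  rw [hval, val_tmonEval] at hq0
  have hi : (0 : ℚ) ≤ q.2.1 := q.2.1.cast_nonneg
  have hc := h.coeff_nonpos hq
  exact ⟨q, hq, by linarith, by exact_mod_cast (by linarith : (q.2.1 : ℚ) = 0)⟩

lemma exists_monomial_free_of_snd (h : IsTangibleLiftOnXline m ms) :
    ∃ q ∈ m :: ms, q.1 = 0 ∧ q.2.2 = 0 := by
  have hval : (tpolyEval m ms 0 (-1)).val = 0 := by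
    simpa using (h (0, -1) (Or.inr (Or.inr ⟨rfl, by norm_num⟩))).2
  obtain ⟨q, hq, hq0⟩ := exists_val_tmonEval_eq_val_tpolyEval (m := m) (ms := ms) 0 (-1)
  rw [hval, val_tmonEval] at hq0
  have hj : (0 : ℚ) ≤ q.2.2 := q.2.2.cast_nonneg
  have hc := h.coeff_nonpos hq
  exact ⟨q, hq, by linarith, by exact_mod_cast (by linarith : (q.2.2 : ℚ) = 0)⟩

end IsTangibleLiftOnXline

lemma not_isTangibleLiftOnXline (m : ℚ × ℕ × ℕ) (ms : List (ℚ × ℕ × ℕ)) :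
    ¬ IsTangibleLiftOnXline m ms := by
  intro h
  obtain ⟨q, hq, hq0, hdeg⟩ := h.exists_linear_monomial
  obtain ⟨q₁, hq₁, hq₁0, hi⟩ := h.exists_monomial_free_of_fst
  obtain ⟨q₂, hq₂, hq₂0, hj⟩ := h.exists_monomial_free_of_snd
  have attains : ∀ q' : ℚ × ℕ × ℕ, q'.1 = 0 →
      (tmonEval q' 0 0).val = (tpolyEval m ms 0 0).val := fun q' hq' => by
    simp [val_tmonEval, hq', h.val_origin]
  have tangible : (tpolyEval m ms 0 0).ghost = false := (h (0, 0) (Or.inl ⟨rfl, le_rfl⟩)).1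
  have ghost : (tpolyEval m ms 0 0).ghost = true := by
    by_cases hq1 : q.2.1 = 0
    · have hne : q ≠ q₂ := by rintro rfl; omega
      exact tpolyEval_ghost_of_ne hq hq₂ hne (attains q hq0) (attains q₂ hq₂0)
    · have hne : q ≠ q₁ := by rintro rfl; omega
      exact tpolyEval_ghost_of_ne hq hq₁ hne (attains q hq0) (attains q₁ hq₁0)
  rw [tangible] at ghost
  exact Bool.false_ne_true ghost

lemma val_tpolyEval_mul_add_one_eq_of_mem_Xline {p : ℚ × ℚ} (hp : p ∈ Xline) :
    (tpolyEval (0, 1, 1) [(0, 0, 0)] p.1 p.2).val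
      = (tpolyEval (0, 2, 0) [(0, 0, 2), (0, 0, 0)] p.1 p.2).val := by
  obtain ⟨x, y⟩ := p
  simp only [Xline, Set.mem_ofPred_eq] at hp
  simp only [tpolyEval, List.foldl_cons, List.foldl_nil, STQ.val_add, val_tmonEval]
  push_cast
  rcases hp with ⟨rfl, hx⟩ | ⟨rfl, hx⟩ | ⟨rfl, hy⟩ <;> simp only [max_def] <;> split_ifs <;>
    linarith

/-- Let `F` be the supertropical semifield over `ℚ` and `X ⊂ F^(2)` the corner locus of
`f = λ₁ + λ₂ + 0` (the tropical line).  (1) There is no tangible polynomial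
`g ∈ F[λ₁,λ₂]` (a nonempty list of monomials with tangible coefficients and distinct
pure parts) whose value at every tangible point of `X` is tangible and of the same
`ν`-value `max(λ₁, λ₂, 0)` as `f`; i.e. the restriction of `f` to `X` admits no
tangible lift among polynomials.  (2) However, `λ₁λ₂ + 0` is a tangible polynomial
agreeing in `ν`-value with `λ₁² + λ₂² + 0` on `X`. -/
theorem no_tangible_lift_on_tropical_line :
    (¬ ∃ (m : ℚ × ℕ × ℕ) (ms : List (ℚ × ℕ × ℕ)),
        (m :: ms).Pairwise (fun u v => u.2 ≠ v.2) ∧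
        ∀ p ∈ Xline, (tpolyEval m ms p.1 p.2).ghost = false ∧
          (tpolyEval m ms p.1 p.2).val = max p.1 (max p.2 0))
    ∧ (∀ p ∈ Xline,
        (tpolyEval (0, 1, 1) [(0, 0, 0)] p.1 p.2).val
          = (tpolyEval (0, 2, 0) [(0, 0, 2), (0, 0, 0)] p.1 p.2).val) := by
  refine ⟨?_, fun p hp => val_tpolyEval_mul_add_one_eq_of_mem_Xline hp⟩
  rintro ⟨m, ms, -, h⟩
  exact not_isTangibleLiftOnXline m ms h
end
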